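/- (Deterministic Kelvin Circulation Theorem.) Let v : [0,T] × ℝⁿ → ℝⁿ, ξ : [0,T] × ℝⁿ → ℝⁿ and p : [0,T] × ℝⁿ → ℝ be smooth with ∂_t ξ + ∇_{v}ξ + v'⊗ξ = ∇p on [0,T] × ℝⁿ, and let g : [0,T] × ℝⁿ → ℝⁿ be smooth with ∂_t g(t,x) = v(t, g(t,x)). Then for every smooth closed curve c : [0,1] → ℝⁿ with c(0) = c(1), the circulation t ↦ ∫₀¹ ⟨ξ(t, g(t, c(s))), ∂_s(g(t, c(s)))⟩ ds is constant in t on [0,T]. -/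

import Mathlib

noncomputable section
open MeasureTheory

/-- Euclidean dot product on `Fin n → ℝ`. -/
def dotp {n : ℕ} (v w : Fin n → ℝ) : ℝ := ∑ i, v i * w i

/-- Advective derivative `(∇_X ξ)(x) = Dξ(x)·X(x)`. -/
def advDeriv {n : ℕ} (X ξ : (Fin n → ℝ) → (Fin n → ℝ)) (x : Fin n → ℝ) : Fin n → ℝ :=
  fderiv ℝ ξ x (X x)

/-- Line stretching term `(X'⊗ξ)(x) = (DX(x))ᵀ·ξ(x)`. -/
def lineStretch {n : ℕ} (X ξ : (Fin n → ℝ) → (Fin n → ℝ)) (x : Fin n → ℝ) : Fin n → ℝ :=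
  fun i => ∑ j, fderiv ℝ X x (Pi.single i 1) j * ξ x j

/-- Divergence of a vector field. -/
def diver {n : ℕ} (ξ : (Fin n → ℝ) → (Fin n → ℝ)) (x : Fin n → ℝ) : ℝ :=
  ∑ i, fderiv ℝ ξ x (Pi.single i 1) i

/-- Gradient of a scalar function. -/
def gradf {n : ℕ} (f : (Fin n → ℝ) → ℝ) (x : Fin n → ℝ) : Fin n → ℝ :=
  fun i => fderiv ℝ f x (Pi.single i 1)

/-- Componentwise Laplacian. -/
def lap {n : ℕ} (ξ : (Fin n → ℝ) → (Fin n → ℝ)) (x : Fin n → ℝ) : Fin n → ℝ :=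
  ∑ j, fderiv ℝ (fun y => fderiv ℝ ξ y (Pi.single j 1)) x (Pi.single j 1)

/-- The unit cube `[0,1]ⁿ`, realizing the torus `ℝⁿ/ℤⁿ`. -/
def cube (n : ℕ) : Set (Fin n → ℝ) := Set.univ.pi fun _ => Set.Icc (0:ℝ) 1

/-- `ℤⁿ`-periodicity. -/
def ZPeriodic {n : ℕ} {α : Type*} (f : (Fin n → ℝ) → α) : Prop :=
  ∀ (x : Fin n → ℝ) (m : Fin n → ℤ), f (x + fun i => (m i : ℝ)) = f x

/-!
Along the flow, the equation says that the material derivative of `ξ ∘ g` is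
`(∇p - v'⊗ξ) ∘ g`, while symmetry of the mixed partials of `g` gives
`∂ₜ ∂ₛ (g ∘ c) = v'(g) · ∂ₛ (g ∘ c)`. Since `⟨ξ, v' u⟩ = ⟨v'⊗ξ, u⟩`, the two stretching
terms cancel and the time derivative of the circulation integrand is
`⟨∇p ∘ g, ∂ₛ (g ∘ c)⟩ = ∂ₛ (p ∘ g ∘ c)`, whose integral over the closed curve vanishes.
Differentiating under the integral sign, the circulation has zero derivative on `(0, T)`;
being continuous on `[0, T]`, it is constant by the mean value theorem.
-/

open Set Filter Topology Function

theorem ContinuousOn.comp_slice {E F Y : Type*} [TopologicalSpace E] [TopologicalSpace F]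
    [TopologicalSpace Y] {f : ℝ → E → F} {s : Set ℝ} {I : Set Y} {γ : ℝ × Y → E}
    (hf : ContinuousOn (uncurry f) (s ×ˢ univ)) (hγ : ContinuousOn γ (s ×ˢ I)) :
    ContinuousOn (fun q => f q.1 (γ q)) (s ×ˢ I) :=
  hf.comp (continuousOn_fst.prodMk hγ) fun _ hq => ⟨hq.1, trivial⟩

section Slices

variable {E F : Type*} [NormedAddCommGroup E] [NormedSpace ℝ E]
  [NormedAddCommGroup F] [NormedSpace ℝ F] {f : ℝ → E → F} {t : ℝ} {x : E}

theorem ContDiffOn.contDiff_slice {n : WithTop ℕ∞} {s : Set ℝ}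
    (hf : ContDiffOn ℝ n (uncurry f) (s ×ˢ univ)) (ht : t ∈ s) : ContDiff ℝ n (f t) :=
  contDiffOn_univ.mp <| hf.comp (contDiff_const.prodMk contDiff_id).contDiffOn
    fun _ _ => ⟨ht, trivial⟩

theorem ContDiffOn.contDiffAt_slice {n : WithTop ℕ∞} {s : Set ℝ}
    (hf : ContDiffOn ℝ n (uncurry f) (s ×ˢ univ)) (hs : s ∈ 𝓝 t) (x : E) :
    ContDiffAt ℝ n (uncurry f) (t, x) :=
  hf.contDiffAt (prod_mem_nhds hs univ_mem)

theorem HasFDerivAt.hasDerivAt_slice_fst {f' : ℝ × E →L[ℝ] F}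
    (hf : HasFDerivAt (uncurry f) f' (t, x)) : HasDerivAt (f · x) (f' (1, 0)) t :=
  hf.comp_hasDerivAt (f := fun τ => (τ, x)) t ((hasDerivAt_id t).prodMk (hasDerivAt_const t x))

theorem HasFDerivAt.hasFDerivAt_slice_snd {f' : ℝ × E →L[ℝ] F}
    (hf : HasFDerivAt (uncurry f) f' (t, x)) :
    HasFDerivAt (f t) (f'.comp (.inr ℝ ℝ E)) x :=
  hf.comp x ((hasFDerivAt_const t x).prodMk (hasFDerivAt_id x))

theorem ContDiffOn.hasDerivAt_derivWithin_slice {n : WithTop ℕ∞} (hn : n ≠ 0) {s : Set ℝ}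
    (hf : ContDiffOn ℝ n (uncurry f) (s ×ˢ univ)) (hs : s ∈ 𝓝 t) (x : E) :
    HasDerivAt (f · x) (derivWithin (f · x) s t) t := by
  have h := ((hf.contDiffAt_slice hs x).differentiableAt hn).hasFDerivAt.hasDerivAt_slice_fst
  rwa [derivWithin_of_mem_nhds hs, h.deriv]

theorem DifferentiableWithinAt.fderiv_slice_snd {s : Set ℝ}
    (hf : DifferentiableWithinAt ℝ (uncurry f) (s ×ˢ univ) (t, x)) (ht : t ∈ s) :
    fderiv ℝ (f t) x = (fderivWithin ℝ (uncurry f) (s ×ˢ univ) (t, x)).comp (.inr ℝ ℝ E) := by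
  have h := hf.hasFDerivWithinAt.comp x
    ((hasFDerivAt_const t x).prodMk (hasFDerivAt_id x)).hasFDerivWithinAt
    (fun _ _ => ⟨ht, trivial⟩ : MapsTo (fun y => (t, y)) univ (s ×ˢ univ))
  exact (hasFDerivWithinAt_univ.mp h).fderiv

theorem ContDiffOn.continuousOn_fderiv_slice {n : WithTop ℕ∞} (hn : 1 ≤ n) {s : Set ℝ}
    (hs : UniqueDiffOn ℝ s) (hf : ContDiffOn ℝ n (uncurry f) (s ×ˢ univ)) :
    ContinuousOn (uncurry fun t => fderiv ℝ (f t)) (s ×ˢ univ) :=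
  ((hf.continuousOn_fderivWithin (hs.prod uniqueDiffOn_univ) hn).clm_comp
    continuousOn_const).congr fun z hz =>
      (hf.differentiableOn (one_pos.trans_le hn).ne' z hz).fderiv_slice_snd hz.1

theorem hasDerivAt_uncurry_comp {γ : ℝ → E} {ft : F} {w : E}
    (hf : DifferentiableAt ℝ (uncurry f) (t, γ t)) (hft : HasDerivAt (f · (γ t)) ft t)
    (hγ : HasDerivAt γ w t) :
    HasDerivAt (fun τ => f τ (γ τ)) (ft + fderiv ℝ (f t) (γ t) w) t := by
  have hD := hf.hasFDerivAt
  have h := hD.comp_hasDerivAt t ((hasDerivAt_id t).prodMk hγ)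
  have hsplit : ((1 : ℝ), w) = (1, 0) + (0, w) := by simp
  have hx : fderiv ℝ (uncurry f) (t, γ t) (0, w) = fderiv ℝ (f t) (γ t) w := by
    rw [hD.hasFDerivAt_slice_snd.fderiv]; rfl
  rwa [hsplit, map_add, hD.hasDerivAt_slice_fst.unique hft, hx] at h

theorem ContDiffOn.continuousOn_fderiv_slice_apply_derivWithin {s I : Set ℝ} {c : ℝ → E}
    (hs : UniqueDiffOn ℝ s) (hI : UniqueDiffOn ℝ I) (hf : ContDiffOn ℝ 1 (uncurry f) (s ×ˢ univ))
    (hc : ContDiffOn ℝ 1 c I) :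
    ContinuousOn (fun q : ℝ × ℝ => fderiv ℝ (f q.1) (c q.2) (derivWithin c I q.2)) (s ×ˢ I) :=
  ((hf.continuousOn_fderiv_slice le_rfl hs).comp_slice
    (hc.continuousOn.comp continuousOn_snd fun _ hq => hq.2)).clm_apply
    ((hc.continuousOn_derivWithin hI le_rfl).comp continuousOn_snd fun _ hq => hq.2)

end Slices

section MixedPartials

variable {E F : Type*} [NormedAddCommGroup E] [NormedSpace ℝ E]
  [NormedAddCommGroup F] [NormedSpace ℝ F]

theorem hasDerivAt_fderiv_slice_apply {g : ℝ → E → F} {u : E → F} {t : ℝ} {x₀ : E}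
    (hg : ContDiffAt ℝ 2 (uncurry g) (t, x₀))
    (hu : ∀ᶠ x in 𝓝 x₀, HasDerivAt (g · x) (u x) t) (w : E) :
    HasDerivAt (fun τ => fderiv ℝ (g τ) x₀ w) (fderiv ℝ u x₀ w) t := by
  set G := uncurry g
  have hG : ∀ᶠ z in 𝓝 (t, x₀), DifferentiableAt ℝ G z :=
    (hg.eventually (by simp)).mono fun z hz => hz.differentiableAt (by simp)
  have hG2 : HasFDerivAt (fderiv ℝ G) (fderiv ℝ (fderiv ℝ G) (t, x₀)) (t, x₀) :=
    ((hg.fderiv_right (m := 1) le_rfl).differentiableAt (by simp)).hasFDerivAt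
  set D2 := fderiv ℝ (fderiv ℝ G) (t, x₀)
  have hslice : (fun τ => fderiv ℝ (g τ) x₀ w) =ᶠ[𝓝 t] fun τ => fderiv ℝ G (τ, x₀) (0, w) := by
    have hτ : Tendsto (fun τ => (τ, x₀)) (𝓝 t) (𝓝 (t, x₀)) :=
      (continuous_id.prodMk continuous_const).tendsto t
    filter_upwards [hτ.eventually hG] with τ hτ
    rw [hτ.hasFDerivAt.hasFDerivAt_slice_snd.fderiv]
    rfl
  have htime : HasDerivAt (fun τ => fderiv ℝ G (τ, x₀) (0, w)) (D2 (1, 0) (0, w)) t := by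
    simpa using (hG2.hasDerivAt_slice_fst (f := fun τ x => fderiv ℝ G (τ, x))).clm_apply
      (hasDerivAt_const t ((0 : ℝ), w))
  -- `∂ₜ G` is `u`, so differentiating it in space gives the other mixed partial of `G`
  have hspace : D2 (0, w) (1, 0) = fderiv ℝ u x₀ w := by
    have hx : Tendsto (fun x => (t, x)) (𝓝 x₀) (𝓝 (t, x₀)) :=
      (continuous_const.prodMk continuous_id).tendsto x₀
    have hdt : (fun x => fderiv ℝ G (t, x) (1, 0)) =ᶠ[𝓝 x₀] u := by
      filter_upwards [hx.eventually hG, hu] with x hGx hux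
      exact hGx.hasFDerivAt.hasDerivAt_slice_fst.unique hux
    have h := ((hG2.hasFDerivAt_slice_snd (f := fun τ x => fderiv ℝ G (τ, x))).clm_apply
      (hasFDerivAt_const ((1 : ℝ), (0 : E)) x₀)).congr_of_eventuallyEq hdt.symm
    rw [h.fderiv]
    simp
  rwa [(hg.isSymmSndFDerivAt (by simp)) (1, 0) (0, w), hspace, ← hslice.hasDerivAt_iff] at htime

end MixedPartials

section DotProduct

variable {n : ℕ}

theorem ContinuousLinearMap.apply_eq_sum_single {F : Type*} [NormedAddCommGroup F]
    [NormedSpace ℝ F] (L : (Fin n → ℝ) →L[ℝ] F) (u : Fin n → ℝ) :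
    L u = ∑ i, u i • L (Pi.single i 1) := by
  conv_lhs => rw [pi_eq_sum_univ' u]
  simp only [map_sum, map_smul]

theorem dotp_sub_left (a b u : Fin n → ℝ) : dotp (a - b) u = dotp a u - dotp b u := by
  simp only [dotp, Pi.sub_apply, sub_mul, Finset.sum_sub_distrib]

theorem dotp_gradf (f : (Fin n → ℝ) → ℝ) (x u : Fin n → ℝ) :
    dotp (gradf f x) u = fderiv ℝ f x u := by
  rw [(fderiv ℝ f x).apply_eq_sum_single u]
  simp only [dotp, gradf, smul_eq_mul, mul_comm]

theorem dotp_lineStretch (X ξ : (Fin n → ℝ) → (Fin n → ℝ)) (x u : Fin n → ℝ) :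
    dotp (lineStretch X ξ x) u = dotp (ξ x) (fderiv ℝ X x u) := by
  rw [(fderiv ℝ X x).apply_eq_sum_single u]
  simp only [dotp, lineStretch, Finset.sum_apply, Pi.smul_apply, smul_eq_mul, Finset.mul_sum,
    Finset.sum_mul]
  rw [Finset.sum_comm]
  exact Finset.sum_congr rfl fun i _ => Finset.sum_congr rfl fun j _ => by ring

theorem HasDerivAt.dotp {a b : ℝ → Fin n → ℝ} {a' b' : Fin n → ℝ} {t : ℝ}
    (ha : HasDerivAt a a' t) (hb : HasDerivAt b b' t) :
    HasDerivAt (fun τ => dotp (a τ) (b τ)) (dotp a' (b t) + dotp (a t) b') t := by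
  simp only [_root_.dotp, ← Finset.sum_add_distrib]
  exact HasDerivAt.fun_sum fun i _ => (hasDerivAt_pi.mp ha i).mul (hasDerivAt_pi.mp hb i)

theorem ContinuousOn.dotp {X : Type*} [TopologicalSpace X] {a b : X → Fin n → ℝ} {s : Set X}
    (ha : ContinuousOn a s) (hb : ContinuousOn b s) :
    ContinuousOn (fun q => dotp (a q) (b q)) s :=
  continuousOn_finsetSum _ fun i _ =>
    ((continuous_apply i).comp_continuousOn ha).mul ((continuous_apply i).comp_continuousOn hb)

end DotProduct

section ParametricIntegrals

variable {E : Type*} [NormedAddCommGroup E] [NormedSpace ℝ E]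

theorem integral_fderiv_apply_derivWithin_eq_sub {F : Type*} [NormedAddCommGroup F]
    [NormedSpace ℝ F] [CompleteSpace F] {P : E → F} {c : ℝ → E} {a b : ℝ} (hab : a < b)
    (hP : ContDiff ℝ 1 P) (hc : ContDiffOn ℝ 1 c (Icc a b)) :
    ∫ s in a..b, fderiv ℝ P (c s) (derivWithin c (Icc a b) s) = P (c b) - P (c a) := by
  refine intervalIntegral.integral_eq_sub_of_hasDeriv_right_of_le hab.le
    (hP.continuous.comp_continuousOn hc.continuousOn) (fun s hs => ?_) ?_
  · have hcs := (hc.differentiableOn one_ne_zero s (Ioo_subset_Icc_self hs)).hasDerivWithinAt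
    exact ((hP.differentiable one_ne_zero (c s)).hasFDerivAt.comp_hasDerivAt s
      (hcs.hasDerivAt (Icc_mem_nhds hs.1 hs.2))).hasDerivWithinAt
  · refine ContinuousOn.intervalIntegrable ?_
    rw [uIcc_of_le hab.le]
    exact (hP.continuous_fderiv one_ne_zero |>.comp_continuousOn hc.continuousOn).clm_apply
      (hc.continuousOn_derivWithin (uniqueDiffOn_Icc hab) le_rfl)

theorem ContinuousOn.continuousOn_intervalIntegral {X : Type*} [TopologicalSpace X]
    [FirstCountableTopology X] {Φ : X → ℝ → E} {K : Set X} (hK : IsCompact K) {a b : ℝ} (hab : a ≤ b)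
    (hΦ : ContinuousOn (uncurry Φ) (K ×ˢ Icc a b)) :
    ContinuousOn (fun t => ∫ s in a..b, Φ t s) K := by
  obtain ⟨M, hM⟩ := (hK.prod isCompact_Icc).exists_bound_of_continuousOn hΦ
  have hslice : ∀ t ∈ K, ContinuousOn (Φ t) (Icc a b) := fun t ht =>
    hΦ.comp (continuousOn_const.prodMk continuousOn_id) fun s hs => ⟨ht, hs⟩
  intro t₀ ht₀
  refine intervalIntegral.continuousWithinAt_of_dominated_interval (bound := fun _ => M) ?_ ?_
    intervalIntegrable_const ?_
  · filter_upwards [self_mem_nhdsWithin] with t ht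
    rw [uIoc_of_le hab]
    exact ((hslice t ht).mono Ioc_subset_Icc_self).aestronglyMeasurable measurableSet_Ioc
  · filter_upwards [self_mem_nhdsWithin] with t ht
    refine Eventually.of_forall fun s hs => hM (t, s) ⟨ht, ?_⟩
    rw [uIoc_of_le hab] at hs
    exact Ioc_subset_Icc_self hs
  · refine Eventually.of_forall fun s hs => ?_
    rw [uIoc_of_le hab] at hs
    exact hΦ.comp (continuousOn_id.prodMk continuousOn_const)
      (fun t ht => ⟨ht, Ioc_subset_Icc_self hs⟩) t₀ ht₀

theorem hasDerivAt_intervalIntegral_of_continuousOn {Φ Φ' : ℝ → ℝ → E} {U : Set ℝ}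
    (hU : IsOpen U) {a b : ℝ} (hab : a ≤ b)
    (hΦ : ContinuousOn (uncurry Φ) (U ×ˢ Icc a b))
    (hΦ' : ContinuousOn (uncurry Φ') (U ×ˢ Icc a b))
    (hderiv : ∀ t ∈ U, ∀ s ∈ Icc a b, HasDerivAt (Φ · s) (Φ' t s) t) {t₀ : ℝ} (ht₀ : t₀ ∈ U) :
    HasDerivAt (fun t => ∫ s in a..b, Φ t s) (∫ s in a..b, Φ' t₀ s) t₀ := by
  obtain ⟨ε, hε, hball⟩ := Metric.nhds_basis_closedBall.mem_iff.mp (hU.mem_nhds ht₀)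
  obtain ⟨C, hC⟩ := ((isCompact_closedBall t₀ ε).prod isCompact_Icc).exists_bound_of_continuousOn
    (hΦ'.mono (prod_mono hball le_rfl))
  have hslice : ∀ {Ψ : ℝ → ℝ → E}, ContinuousOn (uncurry Ψ) (U ×ˢ Icc a b) → ∀ t ∈ U,
      AEStronglyMeasurable (Ψ t) (volume.restrict (uIoc a b)) := fun hΨ t ht => by
    rw [uIoc_of_le hab]
    exact ((hΨ.comp (continuousOn_const.prodMk continuousOn_id) fun s hs => ⟨ht, hs⟩).mono
      Ioc_subset_Icc_self).aestronglyMeasurable measurableSet_Ioc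
  have hball' : Metric.ball t₀ ε ⊆ U := Metric.ball_subset_closedBall.trans hball
  refine (intervalIntegral.hasDerivAt_integral_of_dominated_loc_of_deriv_le (bound := fun _ => C)
    (Metric.ball_mem_nhds t₀ hε) ?_ ?_ (hslice hΦ' t₀ ht₀) ?_ intervalIntegrable_const ?_).2
  · filter_upwards [hU.mem_nhds ht₀] with t ht using hslice hΦ t ht
  · refine ContinuousOn.intervalIntegrable ?_
    rw [uIcc_of_le hab]
    exact hΦ.comp (continuousOn_const.prodMk continuousOn_id) fun s hs => ⟨ht₀, hs⟩
  · refine Eventually.of_forall fun s hs t ht => hC (t, s) ⟨Metric.ball_subset_closedBall ht, ?_⟩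
    rw [uIoc_of_le hab] at hs
    exact Ioc_subset_Icc_self hs
  · refine Eventually.of_forall fun s hs t ht => hderiv t (hball' ht) s ?_
    rw [uIoc_of_le hab] at hs
    exact Ioc_subset_Icc_self hs

theorem ContinuousOn.eq_of_hasDerivAt_zero {f : ℝ → ℝ} {a b : ℝ}
    (hf : ContinuousOn f (Icc a b)) (hf' : ∀ t ∈ Ioo a b, HasDerivAt f 0 t) :
    ∀ t₁ ∈ Icc a b, ∀ t₂ ∈ Icc a b, f t₁ = f t₂ := by
  suffices h : ∀ t₁ ∈ Icc a b, ∀ t₂ ∈ Icc a b, t₁ < t₂ → f t₁ = f t₂ by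
    intro t₁ ht₁ t₂ ht₂
    rcases lt_trichotomy t₁ t₂ with hlt | rfl | hgt
    exacts [h t₁ ht₁ t₂ ht₂ hlt, rfl, (h t₂ ht₂ t₁ ht₁ hgt).symm]
  intro t₁ ht₁ t₂ ht₂ hlt
  obtain ⟨τ, hτ, hslope⟩ := exists_hasDerivAt_eq_slope f (fun _ => 0) hlt
    (hf.mono (Icc_subset_Icc ht₁.1 ht₂.2))
    fun τ hτ => hf' τ (Ioo_subset_Ioo ht₁.1 ht₂.2 hτ)
  rw [eq_comm, div_eq_zero_iff, sub_eq_zero] at hslope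
  exact (hslope.resolve_right (sub_ne_zero.mpr hlt.ne')).symm

end ParametricIntegrals

section Kelvin

variable {n : ℕ} {v ξ g : ℝ → (Fin n → ℝ) → (Fin n → ℝ)} {p : ℝ → (Fin n → ℝ) → ℝ}
  {c : ℝ → Fin n → ℝ}

theorem hasDerivAt_dotp_transport {t : ℝ} {x : Fin n → ℝ}
    (hξ : DifferentiableAt ℝ (uncurry ξ) (t, g t x))
    (hpde : HasDerivAt (ξ · (g t x)) (gradf (p t) (g t x) - advDeriv (v t) (ξ t) (g t x)
      - lineStretch (v t) (ξ t) (g t x)) t)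
    (hv : DifferentiableAt ℝ (v t) (g t x)) (hg : ContDiffAt ℝ 2 (uncurry g) (t, x))
    (hflow : ∀ y, HasDerivAt (g · y) (v t (g t y)) t) (w : Fin n → ℝ) :
    HasDerivAt (fun τ => dotp (ξ τ (g τ x)) (fderiv ℝ (g τ) x w))
      (fderiv ℝ (p t) (g t x) (fderiv ℝ (g t) x w)) t := by
  have hmaterial := hasDerivAt_uncurry_comp hξ hpde (hflow x)
  have hstretch := hasDerivAt_fderiv_slice_apply hg (Eventually.of_forall hflow) w
  rw [fderiv_fun_comp x hv ((hg.differentiableAt (by simp)).hasFDerivAt.hasFDerivAt_slice_snd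
    |>.differentiableAt)] at hstretch
  convert hmaterial.dotp hstretch using 1
  -- the advection terms cancel; the stretching term cancels against the growth of `∂ₓg w`
  rw [advDeriv, sub_right_comm, sub_add_cancel, dotp_sub_left, dotp_lineStretch, dotp_gradf,
    ContinuousLinearMap.comp_apply, sub_add_cancel]

def circulationDensity (ξ g : ℝ → (Fin n → ℝ) → (Fin n → ℝ)) (c : ℝ → Fin n → ℝ) (t s : ℝ) :
    ℝ :=
  dotp (ξ t (g t (c s))) (fderiv ℝ (g t) (c s) (derivWithin c (Icc 0 1) s))

theorem integral_circulationDensity {t : ℝ} (hg : Differentiable ℝ (g t))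
    (hc : DifferentiableOn ℝ c (Icc 0 1)) :
    ∫ s in (0 : ℝ)..1, circulationDensity ξ g c t s =
      ∫ s in (0 : ℝ)..1,
        dotp (ξ t (g t (c s))) (derivWithin (fun σ => g t (c σ)) (Icc 0 1) s) := by
  refine intervalIntegral.integral_congr fun s hs => ?_
  rw [uIcc_of_le zero_le_one] at hs
  have h := fderivWithin_comp_derivWithin (t := univ) s (hg _).differentiableWithinAt (hc s hs)
    (mapsTo_univ _ _)
  rw [fderivWithin_univ] at h
  exact congrArg _ h.symm

theorem continuousOn_circulationDensity {s : Set ℝ} (hs : UniqueDiffOn ℝ s)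
    (hξ : ContinuousOn (uncurry ξ) (s ×ˢ univ)) (hg : ContDiffOn ℝ 1 (uncurry g) (s ×ˢ univ))
    (hc : ContDiffOn ℝ 1 c (Icc 0 1)) :
    ContinuousOn (uncurry (circulationDensity ξ g c)) (s ×ˢ Icc 0 1) :=
  (hξ.comp_slice (hg.continuousOn.comp_slice (hc.continuousOn.comp continuousOn_snd
    fun _ hq => hq.2))).dotp (hg.continuousOn_fderiv_slice_apply_derivWithin hs
      (uniqueDiffOn_Icc one_pos) hc)

theorem hasDerivAt_integral_circulationDensity {U : Set ℝ} (hU : IsOpen U) {t : ℝ} (ht : t ∈ U)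
    (hξ : ContDiffOn ℝ 1 (uncurry ξ) (U ×ˢ univ))
    (hpde : ∀ τ ∈ U, ∀ y, HasDerivAt (ξ · y)
      (gradf (p τ) y - advDeriv (v τ) (ξ τ) y - lineStretch (v τ) (ξ τ) y) τ)
    (hv : ContDiffOn ℝ 1 (uncurry v) (U ×ˢ univ)) (hg : ContDiffOn ℝ 2 (uncurry g) (U ×ˢ univ))
    (hflow : ∀ τ ∈ U, ∀ y, HasDerivAt (g · y) (v τ (g τ y)) τ)
    (hp : ContDiffOn ℝ 1 (uncurry p) (U ×ˢ univ)) (hc : ContDiffOn ℝ 1 c (Icc 0 1))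
    (hclosed : c 0 = c 1) :
    HasDerivAt (fun τ => ∫ s in (0 : ℝ)..1, circulationDensity ξ g c τ s) 0 t := by
  set c' := derivWithin c (Icc 0 1)
  have hg1 : ContDiffOn ℝ 1 (uncurry g) (U ×ˢ univ) := hg.of_le one_le_two
  have hgt := hg1.contDiff_slice ht
  have hpt := hp.contDiff_slice ht
  -- the time derivative of the density is the exact form `d(p ∘ g)` along the closed curve
  have hexact : ∫ s in (0 : ℝ)..1,
      fderiv ℝ (p t) (g t (c s)) (fderiv ℝ (g t) (c s) (c' s)) = 0 := by
    have h := integral_fderiv_apply_derivWithin_eq_sub one_pos (hpt.comp hgt) hc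
    rw [hclosed, sub_self] at h
    refine (intervalIntegral.integral_congr fun s _ => ?_).trans h
    rw [fderiv_comp _ (hpt.differentiable one_ne_zero _) (hgt.differentiable one_ne_zero _)]
    rfl
  have hΦ' : ContinuousOn (uncurry fun τ s =>
      fderiv ℝ (p τ) (g τ (c s)) (fderiv ℝ (g τ) (c s) (c' s))) (U ×ˢ Icc 0 1) :=
    ((hp.continuousOn_fderiv_slice le_rfl hU.uniqueDiffOn).comp_slice (hg.continuousOn.comp_slice
      (hc.continuousOn.comp continuousOn_snd fun _ hq => hq.2))).clm_apply
      (hg1.continuousOn_fderiv_slice_apply_derivWithin hU.uniqueDiffOn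
        (uniqueDiffOn_Icc one_pos) hc)
  have h := hasDerivAt_intervalIntegral_of_continuousOn hU zero_le_one
    (continuousOn_circulationDensity hU.uniqueDiffOn hξ.continuousOn hg1 hc) hΦ'
    (fun τ hτ s _ => hasDerivAt_dotp_transport
      ((hξ.contDiffAt_slice (hU.mem_nhds hτ) _).differentiableAt one_ne_zero) (hpde τ hτ _)
      ((hv.contDiff_slice hτ).differentiable one_ne_zero _)
      (hg.contDiffAt_slice (hU.mem_nhds hτ) _) (hflow τ hτ) _) ht
  rwa [hexact] at h

end Kelvin

/-- deterministic Kelvin Circulation Theorem: if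
`∂_tξ + ∇_vξ + v'⊗ξ = ∇p` and `∂_t g(t,x) = v(t,g(t,x))`, then the circulation
`t ↦ ∫₀¹ ⟨ξ(t,g(t,c(s))), ∂_s g(t,c(s))⟩ ds` along any smooth closed curve `c`
is constant on `[0,T]`. -/
theorem stmt18 {n : ℕ} (T : ℝ) (hT : 0 < T)
    (v ξ g : ℝ → (Fin n → ℝ) → (Fin n → ℝ)) (p : ℝ → (Fin n → ℝ) → ℝ)
    (c : ℝ → Fin n → ℝ)
    (hv : ContDiffOn ℝ (⊤:ℕ∞) (fun z : ℝ × (Fin n → ℝ) => v z.1 z.2)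
      (Set.Icc 0 T ×ˢ Set.univ))
    (hξ : ContDiffOn ℝ (⊤:ℕ∞) (fun z : ℝ × (Fin n → ℝ) => ξ z.1 z.2)
      (Set.Icc 0 T ×ˢ Set.univ))
    (hp : ContDiffOn ℝ (⊤:ℕ∞) (fun z : ℝ × (Fin n → ℝ) => p z.1 z.2)
      (Set.Icc 0 T ×ˢ Set.univ))
    (hg : ContDiffOn ℝ (⊤:ℕ∞) (fun z : ℝ × (Fin n → ℝ) => g z.1 z.2)
      (Set.Icc 0 T ×ˢ Set.univ))
    (hc : ContDiffOn ℝ (⊤:ℕ∞) c (Set.Icc 0 1)) (hclosed : c 0 = c 1)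
    (hpde : ∀ t ∈ Set.Icc (0:ℝ) T, ∀ x,
      derivWithin (fun τ => ξ τ x) (Set.Icc 0 T) t
        + advDeriv (v t) (ξ t) x + lineStretch (v t) (ξ t) x = gradf (p t) x)
    (hflow : ∀ t ∈ Set.Icc (0:ℝ) T, ∀ x,
      derivWithin (fun τ => g τ x) (Set.Icc 0 T) t = v t (g t x)) :
    ∀ t₁ ∈ Set.Icc (0:ℝ) T, ∀ t₂ ∈ Set.Icc (0:ℝ) T,
      (∫ s in (0:ℝ)..1,
        dotp (ξ t₁ (g t₁ (c s))) (derivWithin (fun σ => g t₁ (c σ)) (Set.Icc 0 1) s))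
      = ∫ s in (0:ℝ)..1,
          dotp (ξ t₂ (g t₂ (c s))) (derivWithin (fun σ => g t₂ (c σ)) (Set.Icc 0 1) s) := by
  have hIoo : Ioo 0 T ×ˢ univ ⊆ Icc 0 T ×ˢ (univ : Set (Fin n → ℝ)) :=
    prod_mono Ioo_subset_Icc_self le_rfl
  have hc1 : ContDiffOn ℝ 1 c (Icc 0 1) := hc.of_le (by simp)
  have hξt : ∀ t ∈ Ioo 0 T, ∀ y, HasDerivAt (ξ · y) (gradf (p t) y - advDeriv (v t) (ξ t) y
      - lineStretch (v t) (ξ t) y) t := fun t ht y => by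
    rw [sub_right_comm, ← eq_sub_of_add_eq (eq_sub_of_add_eq (hpde t (Ioo_subset_Icc_self ht) y))]
    exact hξ.hasDerivAt_derivWithin_slice (by simp) (Icc_mem_nhds ht.1 ht.2) y
  have hgt : ∀ t ∈ Ioo 0 T, ∀ y, HasDerivAt (g · y) (v t (g t y)) t := fun t ht y =>
    hflow t (Ioo_subset_Icc_self ht) y ▸
      hg.hasDerivAt_derivWithin_slice (by simp) (Icc_mem_nhds ht.1 ht.2) y
  have hF : ∀ t ∈ Ioo 0 T,
      HasDerivAt (fun τ => ∫ s in (0 : ℝ)..1, circulationDensity ξ g c τ s) 0 t :=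
    fun t ht => hasDerivAt_integral_circulationDensity isOpen_Ioo ht
      ((hξ.mono hIoo).of_le (by simp)) hξt ((hv.mono hIoo).of_le (by simp))
      ((hg.mono hIoo).of_le (by norm_cast)) hgt ((hp.mono hIoo).of_le (by simp)) hc1 hclosed
  have hcont := (continuousOn_circulationDensity (uniqueDiffOn_Icc hT) hξ.continuousOn
    (hg.of_le (by simp)) hc1).continuousOn_intervalIntegral isCompact_Icc zero_le_one
  intro t₁ ht₁ t₂ ht₂
  have hdiff : ∀ t ∈ Icc 0 T, Differentiable ℝ (g t) := fun t ht =>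
    (hg.contDiff_slice ht).differentiable (by simp)
  rw [← integral_circulationDensity (hdiff t₁ ht₁) (hc1.differentiableOn one_ne_zero),
    ← integral_circulationDensity (hdiff t₂ ht₂) (hc1.differentiableOn one_ne_zero)]
  exact hcont.eq_of_hasDerivAt_zero hF t₁ ht₁ t₂ ht₂
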